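/- For every real r > 2 there exists a constant C_r > 0 such that for every τ ≥ 0 and all a, b, c : ℤ² → [0,∞]: ∑_{(j,k)∈ℤ²×ℤ²} ‖j‖ · a(j) · b(k) · ‖j+k‖^{r} e^{τ‖j+k‖} · c(j+k) · | ‖j+k‖^{r} e^{τ‖j+k‖} − ‖j‖^{r} e^{τ‖j‖} | ≤ C_r [ S_{r,0}(a) · S_{r,0}(b) · S_{r,0}(c) + τ · S_{r+1/2,τ}(a) · S_{r+1/2,τ}(b) · S_{r+1/2,τ}(c) ], where S_{ρ,0} denotes the weighted ℓ²-norm with τ = 0 (no exponential weight). (This is the Fourier-coefficient form of the commutator estimate |⟨A^r e^{τA}((∇·f)g), A^r e^{τA}h⟩ − ⟨(∇·A^r e^{τA}f)g, A^r e^{τA}h⟩| of Lemma A.5.) -/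

import Mathlib

open scoped ENNReal

noncomputable section

/-- Euclidean norm of a lattice point `k ∈ ℤ²` viewed as a vector in `ℝ²`. -/
def nz (k : ℤ × ℤ) : ℝ := Real.sqrt ((k.1 : ℝ) ^ 2 + (k.2 : ℝ) ^ 2)

/-- The weighted ℓ²-norm `S_{ρ,τ}(a) = (∑_k ‖k‖^{2ρ} e^{2τ‖k‖} a(k)²)^{1/2}`. -/
def S (ρ τ : ℝ) (a : ℤ × ℤ → ℝ≥0∞) : ℝ≥0∞ :=
  (∑' k : ℤ × ℤ, ENNReal.ofReal (nz k ^ (2 * ρ) * Real.exp (2 * τ * nz k)) * (a k) ^ 2)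
    ^ ((1 : ℝ) / 2)

/-!
Write `φ(t) = t^r e^{τt}` and `y = ‖j‖`, `z = ‖k‖`, `x = ‖j + k‖`, `M = max x y`. The mean value
theorem for `φ` on `[0, M]` and `e^s ≤ 1 + s e^s` give
`y φ(x) |φ(x) - φ(y)| ≤ y z x^r M^{r-1} (r + (2r+1) τ M e^{τ(x+y+z)})`.
Since `x, y, z ≥ 1` satisfy the triangle inequalities, `M ≤ y + z` and `M² ≤ 2xyz`, so the summand
is at most a constant times `(y^{1-r} + z^{1-r})` times the product of the weighted coefficients
`x^r c(j+k)`, `y^r a(j)`, `z^r b(k)`, plus `τ` times the same with the weights of `S_{r+1/2,τ}`.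
Cauchy–Schwarz and the translation invariance of `ℓ²` bound
`∑ (w(j) + w(k)) F(j) G(k) H(j+k)` by `2 ‖w‖₂ ‖F‖₂ ‖G‖₂ ‖H‖₂`, and `w(k) = ‖k‖^{1-r}` is
square-summable on `ℤ²` because `r > 2`.
-/

open Real Set

lemma nz_nonneg (k : ℤ × ℤ) : 0 ≤ nz k := Real.sqrt_nonneg _

lemma nz_eq_norm (k : ℤ × ℤ) : nz k = ‖((k.1 : ℝ) : ℂ) + (k.2 : ℝ) * Complex.I‖ := by
  rw [Complex.norm_add_mul_I, nz]

lemma nz_add_le (j k : ℤ × ℤ) : nz (j + k) ≤ nz j + nz k := by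
  simp only [nz_eq_norm, Prod.fst_add, Prod.snd_add, Int.cast_add, Complex.ofReal_add]
  exact (congrArg norm (by ring)).trans_le (norm_add_le _ _)

lemma nz_le_add (j k : ℤ × ℤ) : nz j ≤ nz (j + k) + nz k := by
  simpa [nz] using nz_add_le (j + k) (-k)

lemma one_le_nz {k : ℤ × ℤ} (hk : k ≠ 0) : 1 ≤ nz k := by
  rw [nz, Real.one_le_sqrt]
  have hk' : k.1 ≠ 0 ∨ k.2 ≠ 0 := by
    contrapose! hk
    exact Prod.ext hk.1 hk.2
  have : 0 < k.1 ^ 2 + k.2 ^ 2 := by rcases hk' with h | h <;> positivity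
  exact_mod_cast (by omega : (1 : ℤ) ≤ k.1 ^ 2 + k.2 ^ 2)

lemma sup_norm_le_nz (k : ℤ × ℤ) : ‖(finTwoArrowEquiv ℤ).symm k‖ ≤ nz k := by
  refine (pi_norm_le_iff_of_nonneg (nz_nonneg k)).2 fun i => ?_
  rw [Int.norm_eq_abs, nz, ← Real.sqrt_sq_eq_abs]
  fin_cases i <;> exact Real.sqrt_le_sqrt (by simp; positivity)

lemma summable_nz_rpow_neg {s : ℝ} (hs : 2 < s) : Summable fun k : ℤ × ℤ => nz k ^ (-s) := by
  have hsup := ((finTwoArrowEquiv ℤ).symm.summable_iff).2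
    (EisensteinSeries.summable_one_div_norm_rpow hs)
  refine hsup.of_nonneg_of_le (fun k => rpow_nonneg (nz_nonneg k) _) fun k => ?_
  rcases eq_or_ne k 0 with rfl | hk
  · simp only [nz, Prod.fst_zero, Prod.snd_zero, Int.cast_zero]
    norm_num [zero_rpow (by linarith : -s ≠ 0)]
    positivity
  · have hpos : 0 < ‖(finTwoArrowEquiv ℤ).symm k‖ :=
      norm_pos_iff.2 (by simpa using (finTwoArrowEquiv ℤ).symm.injective.ne hk)
    exact rpow_le_rpow_of_nonpos hpos (sup_norm_le_nz k) (by linarith)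

def powExp (ρ τ t : ℝ) : ℝ := t ^ ρ * exp (τ * t)

lemma powExp_nonneg (ρ τ : ℝ) {t : ℝ} (ht : 0 ≤ t) : 0 ≤ powExp ρ τ t := by
  unfold powExp; positivity

@[simp] lemma powExp_zero_right (ρ t : ℝ) : powExp ρ 0 t = t ^ ρ := by
  simp [powExp]

lemma powExp_sq (ρ τ : ℝ) {t : ℝ} (ht : 0 ≤ t) :
    powExp ρ τ t ^ 2 = t ^ (2 * ρ) * exp (2 * τ * t) := by
  rw [powExp, mul_pow, ← rpow_natCast, ← rpow_mul ht, ← exp_nat_mul]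
  push_cast; ring_nf

lemma hasDerivAt_powExp {ρ : ℝ} (hρ : 1 ≤ ρ) (τ t : ℝ) :
    HasDerivAt (powExp ρ τ) ((ρ * t ^ (ρ - 1) + τ * t ^ ρ) * exp (τ * t)) t := by
  refine ((hasDerivAt_rpow_const (Or.inr hρ)).mul
    ((hasDerivAt_id t).const_mul τ).exp).congr_deriv ?_
  simp only [id, mul_one]
  ring

lemma abs_powExp_sub_le {ρ τ L x y : ℝ} (hρ : 1 ≤ ρ) (hτ : 0 ≤ τ)
    (hx : x ∈ Icc 0 L) (hy : y ∈ Icc 0 L) :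
    |powExp ρ τ x - powExp ρ τ y| ≤ (ρ * L ^ (ρ - 1) + τ * L ^ ρ) * exp (τ * L) * |x - y| := by
  refine (convex_Icc 0 L).norm_image_sub_le_of_norm_hasDerivWithin_le
    (fun t _ => (hasDerivAt_powExp hρ τ t).hasDerivWithinAt) (fun t ht => ?_) hy hx
  obtain ⟨ht0, htL⟩ := ht
  have hL : 0 ≤ L := ht0.trans htL
  rw [Real.norm_eq_abs, abs_of_nonneg (by positivity)]
  gcongr

lemma Real.exp_le_one_add_mul_exp (t : ℝ) : exp t ≤ 1 + t * exp t := by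
  have h : exp t * exp (-t) = 1 := by rw [← exp_add, add_neg_cancel, exp_zero]
  nlinarith [add_one_le_exp (-t), exp_pos t]

lemma Real.add_rpow_le_two_rpow_mul_rpow_add_rpow {p y z : ℝ} (hp : 0 ≤ p) (hy : 0 ≤ y)
    (hz : 0 ≤ z) :
    (y + z) ^ p ≤ 2 ^ p * (y ^ p + z ^ p) := calc
  (y + z) ^ p ≤ (2 * max y z) ^ p := by gcongr; linarith [le_max_left y z, le_max_right y z]
  _ = 2 ^ p * max y z ^ p := mul_rpow zero_le_two (le_max_of_le_left hy)
  _ ≤ 2 ^ p * (y ^ p + z ^ p) := by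
    gcongr
    rcases max_choice y z with h | h <;> rw [h] <;> linarith [rpow_nonneg hy p, rpow_nonneg hz p]

lemma max_le_two_mul_sqrt_mul_mul {x y z : ℝ} (hx : 1 ≤ x) (hy : 1 ≤ y) (hz : 1 ≤ z)
    (hxyz : x ≤ y + z) (hyxz : y ≤ x + z) : max x y ≤ 2 * √(x * y * z) := by
  have hx0 : 0 < x := by linarith
  have hy0 : 0 < y := by linarith
  refine (pow_le_pow_iff_left₀ (by positivity) (by positivity) two_ne_zero).1 ?_
  rw [mul_pow, sq_sqrt (by positivity)]
  rcases max_choice x y with h | h <;> rw [h]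
  · nlinarith [mul_le_mul_of_nonneg_left hxyz hx0.le,
      mul_nonneg hx0.le (mul_nonneg (sub_nonneg.2 hy) (sub_nonneg.2 hz))]
  · nlinarith [mul_le_mul_of_nonneg_left hyxz hy0.le,
      mul_nonneg hy0.le (mul_nonneg (sub_nonneg.2 hx) (sub_nonneg.2 hz))]

lemma mul_mul_rpow_sub_one_add_rpow_sub_one {y z : ℝ} (hy : 0 < y) (hz : 0 < z) (r : ℝ) :
    y * z * (y ^ (r - 1) + z ^ (r - 1)) = (y ^ (1 - r) + z ^ (1 - r)) * (y ^ r * z ^ r) := by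
  have hy' : y * y ^ (r - 1) = y ^ r := by rw [mul_comm, ← rpow_add_one hy.ne', sub_add_cancel]
  have hz' : z * z ^ (r - 1) = z ^ r := by rw [mul_comm, ← rpow_add_one hz.ne', sub_add_cancel]
  have hy'' : y ^ (1 - r) * y ^ r = y := by rw [← rpow_add hy, sub_add_cancel, rpow_one]
  have hz'' : z ^ (1 - r) * z ^ r = z := by rw [← rpow_add hz, sub_add_cancel, rpow_one]
  linear_combination z * hy' + y * hz' - z ^ r * hy'' - y ^ r * hz''

lemma powExp_add_half (ρ τ : ℝ) {t : ℝ} (ht : 0 < t) :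
    powExp (ρ + 1 / 2) τ t = t ^ ρ * √t * exp (τ * t) := by
  rw [powExp, rpow_add ht, sqrt_eq_rpow]

lemma powExp_mul_abs_powExp_sub_le {r τ x y : ℝ} (hr : 1 ≤ r) (hτ : 0 ≤ τ) (hx : 0 ≤ x)
    (hy : 0 ≤ y) :
    powExp r τ x * |powExp r τ x - powExp r τ y|
      ≤ x ^ r * max x y ^ (r - 1)
          * (r + (2 * r + 1) * τ * max x y * exp (τ * (x + max x y))) * |x - y| := by
  set M := max x y
  have hM : 0 ≤ M := hx.trans (le_max_left x y)
  have hxM : x ≤ M := le_max_left x y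
  have hD := abs_powExp_sub_le hr hτ (L := M) ⟨hx, hxM⟩ ⟨hy, le_max_right x y⟩
  have hMr : M ^ r = M ^ (r - 1) * M := by
    rw [← rpow_add_one' hM (by linarith), sub_add_cancel]
  have he : r * exp (τ * (x + M)) ≤ r + 2 * r * τ * M * exp (τ * (x + M)) := by
    have := exp_le_one_add_mul_exp (τ * (x + M))
    have : r * τ * exp (τ * (x + M)) * x ≤ r * τ * exp (τ * (x + M)) * M := by gcongr
    nlinarith
  calc powExp r τ x * |powExp r τ x - powExp r τ y|
      ≤ x ^ r * exp (τ * x) * ((r * M ^ (r - 1) + τ * M ^ r) * exp (τ * M) * |x - y|) := by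
        unfold powExp at hD ⊢; gcongr
    _ = x ^ r * M ^ (r - 1) * (r * exp (τ * (x + M)) + τ * M * exp (τ * (x + M))) * |x - y| := by
        rw [hMr, mul_add τ, exp_add]; ring
    _ ≤ x ^ r * M ^ (r - 1) * (r + (2 * r + 1) * τ * M * exp (τ * (x + M))) * |x - y| := by
        gcongr x ^ r * M ^ (r - 1) * ?_ * |x - y|
        linarith

lemma mul_powExp_mul_abs_powExp_sub_le {r τ x y z : ℝ} (hr : 1 ≤ r) (hτ : 0 ≤ τ)
    (hx : 1 ≤ x) (hy : 1 ≤ y) (hz : 1 ≤ z) (hxyz : x ≤ y + z) (hyxz : y ≤ x + z) :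
    y * powExp r τ x * |powExp r τ x - powExp r τ y|
      ≤ (2 * r + 1) * 2 ^ r * (y ^ (1 - r) + z ^ (1 - r))
          * (y ^ r * z ^ r * x ^ r
            + τ * (powExp (r + 1 / 2) τ y * powExp (r + 1 / 2) τ z * powExp (r + 1 / 2) τ x)) := by
  have hx0 : 0 < x := by linarith
  have hy0 : 0 < y := by linarith
  have hz0 : 0 < z := by linarith
  set M := max x y
  set s := √(x * y * z)
  set E := exp (τ * (x + y + z))
  have hM : 0 ≤ M := hx0.le.trans (le_max_left x y)
  have hMyz : M ≤ y + z := max_le hxyz (by linarith)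
  have hMs : M ≤ 2 * s := max_le_two_mul_sqrt_mul_mul hx hy hz hxyz hyxz
  have hMpow : M ^ (r - 1) ≤ 2 ^ (r - 1) * (y ^ (r - 1) + z ^ (r - 1)) :=
    (rpow_le_rpow (by linarith) hMyz (by linarith)).trans
      (add_rpow_le_two_rpow_mul_rpow_add_rpow (by linarith) (by linarith) (by linarith))
  have hE : exp (τ * (x + M)) ≤ E := exp_le_exp.2 (by nlinarith)
  have hxy : |x - y| ≤ z := abs_sub_le_iff.2 ⟨by linarith, by linarith⟩
  have hhalf : powExp (r + 1 / 2) τ y * powExp (r + 1 / 2) τ z * powExp (r + 1 / 2) τ x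
      = y ^ r * z ^ r * x ^ r * (s * E) := by
    simp only [powExp_add_half r τ hx0, powExp_add_half r τ hy0, powExp_add_half r τ hz0, s, E,
      sqrt_mul (by positivity : 0 ≤ x * y), sqrt_mul hx0.le, mul_add, exp_add]
    ring
  have h2r : (2 : ℝ) ^ r = 2 ^ (r - 1) * 2 := by
    rw [← rpow_add_one two_ne_zero, sub_add_cancel]
  calc y * powExp r τ x * |powExp r τ x - powExp r τ y|
      = y * (powExp r τ x * |powExp r τ x - powExp r τ y|) := mul_assoc _ _ _
    _ ≤ y * (x ^ r * M ^ (r - 1) * (r + (2 * r + 1) * τ * M * exp (τ * (x + M))) * z) := by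
        gcongr y * ?_
        exact (powExp_mul_abs_powExp_sub_le hr hτ hx0.le hy0.le).trans (by gcongr)
    _ ≤ y * (x ^ r * (2 ^ (r - 1) * (y ^ (r - 1) + z ^ (r - 1)))
          * (r + (2 * r + 1) * τ * (2 * s) * E) * z) := by gcongr
    _ ≤ (2 * r + 1) * 2 ^ r * (y * z * (y ^ (r - 1) + z ^ (r - 1))) * x ^ r
          * (1 + τ * (s * E)) := by
        rw [h2r]
        have hr' : 0 ≤ 3 * r + 2 := by linarith
        have : 0 ≤ 2 ^ (r - 1) * (y * z * (y ^ (r - 1) + z ^ (r - 1))) * x ^ r * (3 * r + 2) := by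
          positivity
        nlinarith
    _ = _ := by rw [mul_mul_rpow_sub_one_add_rpow_sub_one hy0 hz0, hhalf]; ring

section L2

variable {α : Type*}

def l2Norm (f : α → ℝ≥0∞) : ℝ≥0∞ := (∑' i, f i ^ 2) ^ ((1 : ℝ) / 2)

lemma tsum_mul_le_l2Norm_mul_l2Norm (f g : α → ℝ≥0∞) :
    ∑' i, f i * g i ≤ l2Norm f * l2Norm g := by
  rw [ENNReal.tsum_eq_iSup_sum]
  refine iSup_le fun s => (ENNReal.inner_le_Lp_mul_Lq s f g .two_two).trans ?_
  simp only [l2Norm, ENNReal.rpow_two]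
  gcongr <;> exact ENNReal.sum_le_tsum s

lemma l2Norm_comp_add_left {G : Type*} [AddGroup G] (f : G → ℝ≥0∞) (j : G) :
    l2Norm (fun k => f (j + k)) = l2Norm f := by
  simp only [l2Norm]
  congr 1
  exact (Equiv.addLeft j).tsum_eq fun k => f k ^ 2

lemma l2Norm_ofReal {f : α → ℝ} (hf : ∀ i, 0 ≤ f i) (hs : Summable fun i => f i ^ 2) :
    l2Norm (fun i => ENNReal.ofReal (f i)) = ENNReal.ofReal √(∑' i, f i ^ 2) := by
  rw [l2Norm, sqrt_eq_rpow, ← ENNReal.ofReal_rpow_of_nonneg (tsum_nonneg fun i => sq_nonneg _)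
    (by norm_num), ENNReal.ofReal_tsum_of_nonneg (fun i => sq_nonneg _) hs]
  simp only [ENNReal.ofReal_pow (hf _)]

variable {G : Type*}

lemma tsum_mul_mul_add_le [AddGroup G] (f g h : G → ℝ≥0∞) :
    ∑' p : G × G, f p.1 * g p.2 * h (p.1 + p.2) ≤ (∑' j, f j) * (l2Norm g * l2Norm h) := by
  rw [ENNReal.tsum_prod', ← ENNReal.tsum_mul_right]
  refine ENNReal.tsum_le_tsum fun j => ?_
  calc ∑' k, f j * g k * h (j + k) = f j * ∑' k, g k * h (j + k) := by
        simp_rw [mul_assoc]; exact ENNReal.tsum_mul_left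
    _ ≤ f j * (l2Norm g * l2Norm fun k => h (j + k)) := by
        gcongr; exact tsum_mul_le_l2Norm_mul_l2Norm _ _
    _ = f j * (l2Norm g * l2Norm h) := by rw [l2Norm_comp_add_left]

lemma tsum_mul_mul_mul_add_le [AddGroup G] (w f g h : G → ℝ≥0∞) :
    ∑' p : G × G, w p.1 * f p.1 * g p.2 * h (p.1 + p.2)
      ≤ l2Norm w * (l2Norm f * l2Norm g * l2Norm h) :=
  calc _ ≤ (∑' j, w j * f j) * (l2Norm g * l2Norm h) := tsum_mul_mul_add_le (w * f) g h
    _ ≤ l2Norm w * l2Norm f * (l2Norm g * l2Norm h) := by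
      gcongr; exact tsum_mul_le_l2Norm_mul_l2Norm w f
    _ = _ := by ring

lemma tsum_add_mul_mul_mul_add_le [AddCommGroup G] (w f g h : G → ℝ≥0∞) :
    ∑' p : G × G, (w p.1 + w p.2) * (f p.1 * g p.2 * h (p.1 + p.2))
      ≤ 2 * l2Norm w * (l2Norm f * l2Norm g * l2Norm h) := by
  have hswap : ∑' p : G × G, w p.2 * f p.1 * g p.2 * h (p.1 + p.2)
      = ∑' p : G × G, w p.1 * g p.1 * f p.2 * h (p.1 + p.2) := by
    rw [← (Equiv.prodComm G G).tsum_eq]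
    refine tsum_congr fun p => ?_
    simp only [Equiv.prodComm_apply, Prod.fst_swap, Prod.snd_swap, add_comm p.2]
    ring
  calc _ = ∑' p : G × G, w p.1 * f p.1 * g p.2 * h (p.1 + p.2)
        + ∑' p : G × G, w p.1 * g p.1 * f p.2 * h (p.1 + p.2) := by
        rw [← hswap, ← ENNReal.tsum_add]; exact tsum_congr fun p => by ring
    _ ≤ l2Norm w * (l2Norm f * l2Norm g * l2Norm h)
        + l2Norm w * (l2Norm g * l2Norm f * l2Norm h) :=
        add_le_add (tsum_mul_mul_mul_add_le w f g h) (tsum_mul_mul_mul_add_le w g f h)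
    _ = _ := by ring

end L2

def weighted (ρ τ : ℝ) (a : ℤ × ℤ → ℝ≥0∞) (k : ℤ × ℤ) : ℝ≥0∞ :=
  ENNReal.ofReal (powExp ρ τ (nz k)) * a k

lemma S_eq_l2Norm_weighted (ρ τ : ℝ) (a : ℤ × ℤ → ℝ≥0∞) : S ρ τ a = l2Norm (weighted ρ τ a) := by
  simp only [S, l2Norm, weighted, mul_pow,
    ← ENNReal.ofReal_pow (powExp_nonneg ρ τ (nz_nonneg _)), powExp_sq ρ τ (nz_nonneg _)]

lemma exists_pos_l2Norm_ofReal_nz_rpow_eq {r : ℝ} (hr : 2 < r) :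
    ∃ W : ℝ, 0 < W ∧ l2Norm (fun k => ENNReal.ofReal (nz k ^ (1 - r))) = ENNReal.ofReal W := by
  have hsq : ∀ k, (nz k ^ (1 - r)) ^ 2 = nz k ^ (-(2 * r - 2)) := fun k => by
    rw [← rpow_natCast, ← rpow_mul (nz_nonneg k)]; ring_nf
  have hs : Summable fun k => (nz k ^ (1 - r)) ^ 2 := by
    simpa only [hsq] using summable_nz_rpow_neg (by linarith : 2 < 2 * r - 2)
  refine ⟨_, sqrt_pos.2 (hs.tsum_pos (fun k => sq_nonneg _) (1, 0) ?_),
    l2Norm_ofReal (fun k => rpow_nonneg (nz_nonneg k) _) hs⟩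
  simp [nz]

lemma commutator_term_le {r τ : ℝ} (hr : 1 ≤ r) (hτ : 0 ≤ τ) (a b c : ℤ × ℤ → ℝ≥0∞)
    (j k : ℤ × ℤ) :
    ENNReal.ofReal (nz j) * a j * b k * ENNReal.ofReal (nz (j + k) ^ r * exp (τ * nz (j + k)))
        * c (j + k)
        * ENNReal.ofReal |nz (j + k) ^ r * exp (τ * nz (j + k)) - nz j ^ r * exp (τ * nz j)|
      ≤ ENNReal.ofReal ((2 * r + 1) * 2 ^ r)
          * ((ENNReal.ofReal (nz j ^ (1 - r)) + ENNReal.ofReal (nz k ^ (1 - r)))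
            * (weighted r 0 a j * weighted r 0 b k * weighted r 0 c (j + k)))
        + ENNReal.ofReal τ * (ENNReal.ofReal ((2 * r + 1) * 2 ^ r)
          * ((ENNReal.ofReal (nz j ^ (1 - r)) + ENNReal.ofReal (nz k ^ (1 - r)))
            * (weighted (r + 1 / 2) τ a j * weighted (r + 1 / 2) τ b k
              * weighted (r + 1 / 2) τ c (j + k)))) := by
  rcases eq_or_ne j 0 with rfl | hj
  · simp [nz]
  rcases eq_or_ne k 0 with rfl | hk
  · simp
  rcases eq_or_ne (j + k) 0 with hjk | hjk
  · simp [hjk, nz, zero_rpow (by linarith : r ≠ 0)]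
  have hx := one_le_nz hjk
  have hy := one_le_nz hj
  have hz := one_le_nz hk
  have key := mul_powExp_mul_abs_powExp_sub_le hr hτ hx hy hz (nz_add_le j k) (nz_le_add j k)
  simp only [weighted, powExp_zero_right]
  generalize nz j = y at *
  generalize nz k = z at *
  generalize nz (j + k) = x at *
  have hK : 0 ≤ (2 * r + 1) * 2 ^ r := by positivity
  generalize (2 * r + 1) * 2 ^ r = K at *
  unfold powExp at key ⊢
  calc _ = ENNReal.ofReal (y * (x ^ r * exp (τ * x)) * |x ^ r * exp (τ * x) - y ^ r * exp (τ * y)|)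
          * (a j * b k * c (j + k)) := by
        simp (disch := positivity) only [ENNReal.ofReal_mul]; ring
    _ ≤ ENNReal.ofReal (K * (y ^ (1 - r) + z ^ (1 - r)) * (y ^ r * z ^ r * x ^ r
          + τ * (y ^ (r + 1 / 2) * exp (τ * y) * (z ^ (r + 1 / 2) * exp (τ * z))
            * (x ^ (r + 1 / 2) * exp (τ * x))))) * (a j * b k * c (j + k)) := by
        gcongr
    _ = _ := by
        simp (disch := positivity) only [ENNReal.ofReal_mul, ENNReal.ofReal_add]; ring

/-- Fourier-coefficient form of the commutator estimate
`|⟨A^r e^{τA}((∇·f)g), A^r e^{τA}h⟩ − ⟨(∇·A^r e^{τA}f)g, A^r e^{τA}h⟩|` of Lemma A.5. -/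
theorem commutator_divergence_estimate :
    ∀ r : ℝ, 2 < r → ∃ C : ℝ, 0 < C ∧ ∀ τ : ℝ, 0 ≤ τ → ∀ a b c : ℤ × ℤ → ℝ≥0∞,
      (∑' p : (ℤ × ℤ) × (ℤ × ℤ),
          ENNReal.ofReal (nz p.1) * a p.1 * b p.2
            * ENNReal.ofReal (nz (p.1 + p.2) ^ r * Real.exp (τ * nz (p.1 + p.2)))
            * c (p.1 + p.2)
            * ENNReal.ofReal |nz (p.1 + p.2) ^ r * Real.exp (τ * nz (p.1 + p.2))
                - nz p.1 ^ r * Real.exp (τ * nz p.1)|)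
        ≤ ENNReal.ofReal C *
            (S r 0 a * S r 0 b * S r 0 c
              + ENNReal.ofReal τ * S (r + 1 / 2) τ a * S (r + 1 / 2) τ b
                  * S (r + 1 / 2) τ c) := by
  intro r hr
  obtain ⟨W, hW, hwW⟩ := exists_pos_l2Norm_ofReal_nz_rpow_eq hr
  have hκ : 0 < (2 * r + 1) * 2 ^ r := mul_pos (by linarith) (by positivity)
  refine ⟨2 * ((2 * r + 1) * 2 ^ r) * W, by positivity, fun τ hτ a b c => ?_⟩
  refine (ENNReal.tsum_le_tsum fun p : (ℤ × ℤ) × (ℤ × ℤ) =>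
    commutator_term_le (r := r) (by linarith) hτ a b c p.1 p.2).trans ?_
  rw [ENNReal.tsum_add, ENNReal.tsum_mul_left, ENNReal.tsum_mul_left, ENNReal.tsum_mul_left]
  have hsum (ρ σ : ℝ) := tsum_add_mul_mul_mul_add_le
    (fun k : ℤ × ℤ => ENNReal.ofReal (nz k ^ (1 - r))) (weighted ρ σ a) (weighted ρ σ b)
    (weighted ρ σ c)
  refine (add_le_add (mul_le_mul_right (hsum r 0) _)
    (mul_le_mul_right (mul_le_mul_right (hsum (r + 1 / 2) τ) _) _)).trans_eq ?_
  rw [ENNReal.ofReal_mul (by positivity : (0 : ℝ) ≤ 2 * ((2 * r + 1) * 2 ^ r)),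
    ENNReal.ofReal_mul zero_le_two, ENNReal.ofReal_ofNat]
  simp only [hwW, ← S_eq_l2Norm_weighted]
  ring

end
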